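/- arXiv:2505.09860 — 9 statements merged into one kernel-verified Lean document; each statement's English description precedes it below -/
import Mathlib

section
/- Let 0 ≤ a_j ≤ a_i < 1 - b_j ≤ 1 - b_i ≤ 1 (writing v̄ := 1 - v), and let H_i, H_j : [0,1] → ℝ be continuously differentiable on an open set containing [a_j, b̄_i]. With K(w,v) := min{w,v} − w·v and with I_f(a,b) := b·f(b) − a·f(a) − ∫_a^b f(v) dv and Ī_f(a,b) := b̄·f(b) − ā·f(a) + ∫_a^b f(v) dv, the double integral ∫_{a_i}^{b̄_i} ∫_{a_j}^{b̄_j} K(v,w) H_j'(v) H_i'(w) dv dw equals I_{H_j}(a_j, a_i)·Ī_{H_i}(a_i, b̄_i) + b_i·H_i(b̄_i)·I_{H_j}(a_i, b̄_j) − a_i·H_i(a_i)·Ī_{H_j}(a_i, b̄_j) + ∫_{a_i}^{b̄_j} H_i(v) H_j(v) dv + [b̄_j·H_j(b̄_j) − a_i·H_j(a_i)]·∫_{b̄_j}^{b̄_i} H_i(v) dv − [a_i·H_j(a_i) + b_j·H_j(b̄_j)]·∫_{a_i}^{b̄_j} H_i(v) dv − (∫_{a_i}^{b̄_j} H_j(v)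 dv)·(∫_{a_i}^{b̄_j} H_i(v) dv) − (∫_{a_i}^{b̄_j} H_j(v) dv)·(∫_{b̄_j}^{b̄_i} H_i(v) dv). -/
/-!
Since `K(v, w) = v (1 - w)` for `v ≤ w` and `K(v, w) = w (1 - v)` for `w ≤ v`, integrating by
parts in `v` against `H_j'` turns the inner integral into
`(1 - w) I_{H_j}(a_j, w) + w Ī_{H_j}(w, b̄_j)` for `w ≤ b̄_j` and into `(1 - w) I_{H_j}(a_j, b̄_j)`
for `w ≥ b̄_j`. The former is an affine function of `w` minus the primitive of `H_j`, so one more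
integration by parts in `w` against `H_i'` on each of `[a_i, b̄_j]` and `[b̄_j, b̄_i]` gives the
closed form.
-/

open MeasureTheory Set

/-- The kernel `K(w,v) = min{w,v} - w·v`. -/
noncomputable def kerK (w v : ℝ) : ℝ := min w v - w * v

/-- `I_f(a,b) = b·f(b) - a·f(a) - ∫_a^b f(v) dv`. -/
noncomputable def Ifun (f : ℝ → ℝ) (a b : ℝ) : ℝ :=
  b * f b - a * f a - ∫ v in a..b, f v

/-- `Ī_f(a,b) = (1-b)·f(b) - (1-a)·f(a) + ∫_a^b f(v) dv`. -/
noncomputable def Ibar (f : ℝ → ℝ) (a b : ℝ) : ℝ :=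
  (1 - b) * f b - (1 - a) * f a + ∫ v in a..b, f v

open intervalIntegral

lemma kerK_of_le {v w : ℝ} (h : v ≤ w) : kerK v w = v * (1 - w) := by
  rw [kerK, min_eq_left h]
  ring

lemma kerK_of_ge {v w : ℝ} (h : w ≤ v) : kerK v w = w * (1 - v) := by
  rw [kerK, min_eq_right h]
  ring

@[simp]
lemma Ibar_self (f : ℝ → ℝ) (a : ℝ) : Ibar f a a = 0 := by
  simp [Ibar]

section Parts

variable {f f' : ℝ → ℝ} {a b : ℝ}

theorem integral_mul_deriv_eq_Ifun (hf : ∀ x ∈ uIcc a b, HasDerivAt f (f' x) x)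
    (hf' : IntervalIntegrable f' volume a b) :
    ∫ x in a..b, x * f' x = Ifun f a b := by
  simpa [Ifun] using
    integral_mul_deriv_eq_deriv_mul (fun x _ => hasDerivAt_id x) hf intervalIntegrable_const hf'

theorem integral_one_sub_mul_deriv_eq_Ibar (hf : ∀ x ∈ uIcc a b, HasDerivAt f (f' x) x)
    (hf' : IntervalIntegrable f' volume a b) :
    ∫ x in a..b, (1 - x) * f' x = Ibar f a b := by
  have := integral_mul_deriv_eq_deriv_mul (fun x _ => (hasDerivAt_id x).const_sub 1) hf
    intervalIntegrable_const hf'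
  simpa [Ibar, sub_eq_add_neg] using this

end Parts

section Kernel

variable {f f' : ℝ → ℝ} {A C w : ℝ}

theorem integral_kerK_mul_deriv_of_mem_Icc (hf : ∀ x ∈ Icc A C, HasDerivAt f (f' x) x)
    (hf' : IntervalIntegrable f' volume A C) (hw : w ∈ Icc A C) :
    ∫ v in A..C, kerK v w * f' v = (1 - w) * Ifun f A w + w * Ibar f w C := by
  have hAC : A ≤ C := hw.1.trans hw.2
  have hw' : w ∈ uIcc A C := by rwa [uIcc_of_le hAC]
  rw [← uIcc_of_le hAC] at hf
  have hint : ∀ {a b}, uIcc a b ⊆ uIcc A C →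
      IntervalIntegrable (fun v => kerK v w * f' v) volume a b := fun h =>
    (hf'.mono_set h).continuousOn_mul (by unfold kerK; fun_prop)
  rw [← integral_add_adjacent_intervals (hint (uIcc_subset_uIcc_left hw'))
    (hint (uIcc_subset_uIcc_right hw'))]
  congr 1
  · rw [integral_congr (g := fun v => (1 - w) * (v * f' v)), intervalIntegral.integral_const_mul,
      integral_mul_deriv_eq_Ifun (fun x hx => hf x (uIcc_subset_uIcc_left hw' hx))
        (hf'.mono_set (uIcc_subset_uIcc_left hw'))]
    intro v hv
    rw [uIcc_of_le hw.1] at hv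
    simp only [kerK_of_le hv.2]
    ring
  · rw [integral_congr (g := fun v => w * ((1 - v) * f' v)), intervalIntegral.integral_const_mul,
      integral_one_sub_mul_deriv_eq_Ibar (fun x hx => hf x (uIcc_subset_uIcc_right hw' hx))
        (hf'.mono_set (uIcc_subset_uIcc_right hw'))]
    intro v hv
    rw [uIcc_of_le hw.2] at hv
    simp only [kerK_of_ge hv.1]
    ring

theorem integral_kerK_mul_deriv_of_le (hf : ∀ x ∈ Icc A C, HasDerivAt f (f' x) x)
    (hf' : IntervalIntegrable f' volume A C) (hAC : A ≤ C) (hCw : C ≤ w) :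
    ∫ v in A..C, kerK v w * f' v = (1 - w) * Ifun f A C := by
  rw [← uIcc_of_le hAC] at hf
  rw [integral_congr (g := fun v => (1 - w) * (v * f' v)), intervalIntegral.integral_const_mul,
    integral_mul_deriv_eq_Ifun hf hf']
  intro v hv
  rw [uIcc_of_le hAC] at hv
  simp only [kerK_of_le (hv.2.trans hCw)]
  ring

end Kernel

theorem one_sub_mul_Ifun_add_mul_Ibar {f : ℝ → ℝ} {A C w : ℝ}
    (hAw : IntervalIntegrable f volume A w) (hwC : IntervalIntegrable f volume w C) :
    (1 - w) * Ifun f A w + w * Ibar f w C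
      = (f A + Ibar f A C) * w - A * f A - ∫ v in A..w, f v := by
  simp only [Ifun, Ibar, ← integral_add_adjacent_intervals hAw hwC]
  ring

theorem integral_affine_sub_primitive_mul_deriv {f g g' : ℝ → ℝ} {A B C c d : ℝ}
    (hAB : A ≤ B) (hBC : B ≤ C) (hf : ContinuousOn f (Icc A C))
    (hg : ∀ x ∈ Icc B C, HasDerivAt g (g' x) x) (hg' : IntervalIntegrable g' volume B C) :
    ∫ w in B..C, (c * w - d - ∫ v in A..w, f v) * g' w
      = (c * C - d - ∫ v in A..C, f v) * g C - (c * B - d - ∫ v in A..B, f v) * g B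
        - c * (∫ w in B..C, g w) + ∫ w in B..C, g w * f w := by
  have hAC : A ≤ C := hAB.trans hBC
  have hBC' : uIcc B C ⊆ Icc A C := uIcc_subset_Icc ⟨hAB, hBC⟩ ⟨hAC, le_rfl⟩
  have hfBC : ContinuousOn f (uIcc B C) := hf.mono hBC'
  have hgBC : ContinuousOn g (uIcc B C) := fun x hx =>
    (hg x (by rwa [← uIcc_of_le hBC])).continuousAt.continuousWithinAt
  have hprim : ContinuousOn (fun w => ∫ v in A..w, f v) (uIcc B C) :=
    (continuousOn_primitive_interval' (hf.mono (uIcc_of_le hAC).subset).intervalIntegrable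
      left_mem_uIcc).mono (hBC'.trans (uIcc_of_le hAC).symm.subset)
  have hderiv : ∀ x ∈ Ioo (min B C) (max B C),
      HasDerivAt (fun w => c * w - d - ∫ v in A..w, f v) (c - f x) x := by
    intro x hx
    rw [min_eq_left hBC, max_eq_right hBC] at hx
    have hxAC : x ∈ Ioo A C := ⟨hAB.trans_lt hx.1, hx.2⟩
    have hfAC : ContinuousOn f (Ioo A C) := hf.mono Ioo_subset_Icc_self
    have hprim_deriv := integral_hasDerivAt_right
      (hf.mono (uIcc_subset_Icc ⟨le_rfl, hAC⟩ (Ioo_subset_Icc_self hxAC))).intervalIntegrable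
      (hfAC.stronglyMeasurableAtFilter isOpen_Ioo x hxAC)
      (hfAC.continuousAt (isOpen_Ioo.mem_nhds hxAC))
    exact ((((hasDerivAt_id x).const_mul c).sub_const d).sub hprim_deriv).congr_deriv (by simp)
  have hsplit : ∫ w in B..C, (c - f w) * g w
      = c * (∫ w in B..C, g w) - ∫ w in B..C, g w * f w := by
    rw [← intervalIntegral.integral_const_mul,
      ← intervalIntegral.integral_sub (f := fun w => c * g w) (g := fun w => g w * f w)
        ((continuousOn_const.mul hgBC).intervalIntegrable) ((hgBC.mul hfBC).intervalIntegrable)]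
    exact integral_congr fun w _ => by ring
  rw [integral_mul_deriv_eq_deriv_mul_of_hasDerivAt (u := fun w => c * w - d - ∫ v in A..w, f v)
      (((continuousOn_const.mul continuousOn_id).sub continuousOn_const).sub hprim) hgBC hderiv
      (fun x hx => hg x (Ioo_subset_Icc_self (by simpa [hBC] using hx)))
      ((continuousOn_const.sub hfBC).intervalIntegrable) hg', hsplit]
  ring

theorem integral_integral_kerK_mul_deriv {f f' g g' : ℝ → ℝ} {A B C D : ℝ}
    (hAB : A ≤ B) (hBC : B ≤ C) (hCD : C ≤ D)
    (hf : ∀ x ∈ Icc A C, HasDerivAt f (f' x) x) (hf' : IntervalIntegrable f' volume A C)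
    (hg : ∀ x ∈ Icc B D, HasDerivAt g (g' x) x) (hg' : IntervalIntegrable g' volume B D) :
    ∫ w in B..D, ∫ v in A..C, kerK v w * f' v * g' w
      = (1 - C) * Ifun f A C * g C - ((1 - B) * Ifun f A B + B * Ibar f B C) * g B
        - (f A + Ibar f A C) * (∫ w in B..C, g w) + (∫ w in B..C, g w * f w)
        + Ifun f A C * Ibar g C D := by
  have hAC : A ≤ C := hAB.trans hBC
  have hB : B ∈ Icc A C := ⟨hAB, hBC⟩
  have hC : C ∈ uIcc B D := by rw [uIcc_of_le (hBC.trans hCD)]; exact ⟨hBC, hCD⟩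
  have hfc : ContinuousOn f (Icc A C) := fun x hx => (hf x hx).continuousAt.continuousWithinAt
  have hfint : ∀ {a b}, a ∈ Icc A C → b ∈ Icc A C → IntervalIntegrable f volume a b :=
    fun ha hb => (hfc.mono (uIcc_subset_Icc ha hb)).intervalIntegrable
  have hg'BC : IntervalIntegrable g' volume B C := hg'.mono_set (uIcc_subset_uIcc_left hC)
  have hg'CD : IntervalIntegrable g' volume C D := hg'.mono_set (uIcc_subset_uIcc_right hC)
  have hgBC : ∀ x ∈ Icc B C, HasDerivAt g (g' x) x := fun x hx => hg x ⟨hx.1, hx.2.trans hCD⟩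
  have hgCD : ∀ x ∈ uIcc C D, HasDerivAt g (g' x) x := fun x hx =>
    hg x ⟨hBC.trans (uIcc_of_le hCD ▸ hx).1, (uIcc_of_le hCD ▸ hx).2⟩
  have hinner_BC : EqOn (fun w => (∫ v in A..C, kerK v w * f' v) * g' w)
      (fun w => ((f A + Ibar f A C) * w - A * f A - ∫ v in A..w, f v) * g' w) (uIcc B C) := by
    intro w hw
    rw [uIcc_of_le hBC] at hw
    have hw' : w ∈ Icc A C := ⟨hAB.trans hw.1, hw.2⟩
    simp only
    rw [integral_kerK_mul_deriv_of_mem_Icc hf hf' hw',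
      one_sub_mul_Ifun_add_mul_Ibar (hfint ⟨le_rfl, hAC⟩ hw') (hfint hw' ⟨hAC, le_rfl⟩)]
  have hinner_CD : EqOn (fun w => (∫ v in A..C, kerK v w * f' v) * g' w)
      (fun w => Ifun f A C * ((1 - w) * g' w)) (uIcc C D) := by
    intro w hw
    rw [uIcc_of_le hCD] at hw
    simp only [integral_kerK_mul_deriv_of_le hf hf' hAC hw.1]
    ring
  have hprim : ContinuousOn (fun w => ∫ v in A..w, f v) (uIcc B C) :=
    (continuousOn_primitive_interval' (hfint ⟨le_rfl, hAC⟩ ⟨hAC, le_rfl⟩) left_mem_uIcc).mono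
      (uIcc_subset_uIcc_right (by rwa [uIcc_of_le hAC]))
  have hint_BC := (hg'BC.continuousOn_mul
    (((continuousOn_const.mul continuousOn_id).sub continuousOn_const).sub hprim)).congr
    (hinner_BC.symm.mono uIoc_subset_uIcc)
  have hint_CD := ((hg'CD.continuousOn_mul (continuousOn_const.sub continuousOn_id)).const_mul
    (Ifun f A C)).congr (hinner_CD.symm.mono uIoc_subset_uIcc)
  calc ∫ w in B..D, ∫ v in A..C, kerK v w * f' v * g' w
      = ∫ w in B..D, (∫ v in A..C, kerK v w * f' v) * g' w := by
        simp only [intervalIntegral.integral_mul_const]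
    _ = (∫ w in B..C, (∫ v in A..C, kerK v w * f' v) * g' w)
          + ∫ w in C..D, (∫ v in A..C, kerK v w * f' v) * g' w :=
        (integral_add_adjacent_intervals hint_BC hint_CD).symm
    _ = _ := by
        rw [integral_congr hinner_BC, integral_congr hinner_CD,
          integral_affine_sub_primitive_mul_deriv hAB hBC hfc hgBC hg'BC,
          intervalIntegral.integral_const_mul, integral_one_sub_mul_deriv_eq_Ibar
            hgCD hg'CD,
          ← one_sub_mul_Ifun_add_mul_Ibar (hfint ⟨le_rfl, hAC⟩ hB) (hfint hB ⟨hAC, le_rfl⟩),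
          ← one_sub_mul_Ifun_add_mul_Ibar (hfint ⟨le_rfl, hAC⟩ ⟨hAC, le_rfl⟩)
            (hfint ⟨hAC, le_rfl⟩ ⟨hAC, le_rfl⟩), Ibar_self]
        ring

theorem doubleIntegral_trimmed_moment_covariance_general
    (aj ai bj bi : ℝ)
    (h1 : aj ≤ ai) (h2 : ai < 1 - bj) (h3 : 1 - bj ≤ 1 - bi)
    (Hi Hj : ℝ → ℝ) (U : Set ℝ) (hU : IsOpen U) (hsub : Icc aj (1 - bi) ⊆ U)
    (hHi : ContDiffOn ℝ 1 Hi U) (hHj : ContDiffOn ℝ 1 Hj U) :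
    (∫ w in ai..(1 - bi), ∫ v in aj..(1 - bj),
        kerK v w * deriv Hj v * deriv Hi w)
      =
    Ifun Hj aj ai * Ibar Hi ai (1 - bi)
      + bi * Hi (1 - bi) * Ifun Hj ai (1 - bj)
      - ai * Hi ai * Ibar Hj ai (1 - bj)
      + (∫ v in ai..(1 - bj), Hi v * Hj v)
      + ((1 - bj) * Hj (1 - bj) - ai * Hj ai) * (∫ v in (1 - bj)..(1 - bi), Hi v)
      - (ai * Hj ai + bj * Hj (1 - bj)) * (∫ v in ai..(1 - bj), Hi v)
      - (∫ v in ai..(1 - bj), Hj v) * (∫ v in ai..(1 - bj), Hi v)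
      - (∫ v in ai..(1 - bj), Hj v) * (∫ v in (1 - bj)..(1 - bi), Hi v) := by
  have haj : aj ∈ Icc aj (1 - bi) := ⟨le_rfl, h1.trans (h2.le.trans h3)⟩
  have hbi : 1 - bi ∈ Icc aj (1 - bi) := ⟨h1.trans (h2.le.trans h3), le_rfl⟩
  have hai : ai ∈ Icc aj (1 - bi) := ⟨h1, h2.le.trans h3⟩
  have hbj : 1 - bj ∈ Icc aj (1 - bi) := ⟨h1.trans h2.le, h3⟩
  have hderiv : ∀ {H : ℝ → ℝ}, ContDiffOn ℝ 1 H U →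
      ∀ x ∈ Icc aj (1 - bi), HasDerivAt H (deriv H x) x := fun hH x hx =>
    (hH.differentiableOn one_ne_zero).hasDerivAt (hU.mem_nhds (hsub hx))
  have hint : ∀ {H : ℝ → ℝ} {a b : ℝ}, ContinuousOn H U → a ∈ Icc aj (1 - bi) →
      b ∈ Icc aj (1 - bi) → IntervalIntegrable H volume a b := fun hH ha hb =>
    (hH.mono ((uIcc_subset_Icc ha hb).trans hsub)).intervalIntegrable
  have hderiv_int : ∀ {H : ℝ → ℝ}, ContDiffOn ℝ 1 H U → ∀ {a b : ℝ}, a ∈ Icc aj (1 - bi) →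
      b ∈ Icc aj (1 - bi) → IntervalIntegrable (deriv H) volume a b := fun hH =>
    hint (hH.continuousOn_deriv_of_isOpen hU le_rfl)
  have hsplit_j := integral_add_adjacent_intervals (hint hHj.continuousOn haj hai)
    (hint hHj.continuousOn hai hbj)
  have hsplit_i := integral_add_adjacent_intervals (hint hHi.continuousOn hai hbj)
    (hint hHi.continuousOn hbj hbi)
  rw [integral_integral_kerK_mul_deriv h1 h2.le h3
    (fun x hx => hderiv hHj x ⟨hx.1, hx.2.trans h3⟩) (hderiv_int hHj haj hbj)
    (fun x hx => hderiv hHi x ⟨h1.trans hx.1, hx.2⟩) (hderiv_int hHi hai hbi)]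
  simp only [Ifun, Ibar, ← hsplit_j, ← hsplit_i]
  ring

/-- Single-integration expression for the double integral
`∫_{a_i}^{b̄_i} ∫_{a_j}^{b̄_j} K(v,w) H_j'(v) H_i'(w) dv dw` under the trimming
inequality `0 ≤ a_j ≤ a_i < b̄_j ≤ b̄_i ≤ 1`. -/
theorem doubleIntegral_trimmed_moment_covariance
    (aj ai bj bi : ℝ)
    (h0 : 0 ≤ aj) (h1 : aj ≤ ai) (h2 : ai < 1 - bj) (h3 : 1 - bj ≤ 1 - bi)
    (h4 : 1 - bi ≤ 1)
    (Hi Hj : ℝ → ℝ) (U : Set ℝ) (hU : IsOpen U) (hsub : Icc aj (1 - bi) ⊆ U)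
    (hHi : ContDiffOn ℝ 1 Hi U) (hHj : ContDiffOn ℝ 1 Hj U) :
    (∫ w in ai..(1 - bi), ∫ v in aj..(1 - bj),
        kerK v w * deriv Hj v * deriv Hi w)
      =
    Ifun Hj aj ai * Ibar Hi ai (1 - bi)
      + bi * Hi (1 - bi) * Ifun Hj ai (1 - bj)
      - ai * Hi ai * Ibar Hj ai (1 - bj)
      + (∫ v in ai..(1 - bj), Hi v * Hj v)
      + ((1 - bj) * Hj (1 - bj) - ai * Hj ai) * (∫ v in (1 - bj)..(1 - bi), Hi v)
      - (ai * Hj ai + bj * Hj (1 - bj)) * (∫ v in ai..(1 - bj), Hi v)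
      - (∫ v in ai..(1 - bj), Hj v) * (∫ v in ai..(1 - bj), Hi v)
      - (∫ v in ai..(1 - bj), Hj v) * (∫ v in (1 - bj)..(1 - bi), Hi v) :=
  doubleIntegral_trimmed_moment_covariance_general aj ai bj bi h1 h2 h3 Hi Hj U hU hsub hHi hHj
end

section
/- Let g : (0,1) → ℝ be strictly increasing with g and g² integrable on (0,1), and define c_k(a,b) := (1/(b−a)) ∫_a^b g(u)^k du for 0 ≤ a < b ≤ 1 and integers k ≥ 1. If the trimming proportions satisfy 0 ≤ a_j ≤ a_i < b̄_j ≤ b̄_i ≤ 1 (writing v̄ := 1 − v), then η(a_i, b̄_j) := c₁(a_i, b̄_i)² − 2·c₁(a_i, b̄_i)·c₁(a_j, b̄_j) + c₂(a_j, b̄_j) > 0. -/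
open MeasureTheory Set

/-! `η` is the mean of `(g - c₁(a_i, b̄_i))²` over `(a_j, b̄_j)`: expanding the square gives
`c₁(a_i,b̄_i)² - 2 c₁(a_i,b̄_i) c₁(a_j,b̄_j) + c₂(a_j,b̄_j)`. Since `g` is injective, the integrand
vanishes at most at one point, so this mean is strictly positive. -/

/-- The trimmed-moment constant `c_k(a,b) = (1/(b-a)) ∫_a^b g(u)^k du`. -/
noncomputable def trimC (g : ℝ → ℝ) (k : ℕ) (a b : ℝ) : ℝ :=
  (b - a)⁻¹ * ∫ u in a..b, (g u) ^ k

theorem Set.InjOn.ae_ne {α β : Type*} [MeasurableSpace α] {μ : Measure α} [NullSingletonClass μ]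
    {f : α → β} {s : Set α} (hf : InjOn f s) (y : β) : ∀ᵐ u ∂μ, u ∈ s → f u ≠ y := by
  rw [ae_iff]
  refine Set.Subsingleton.measure_zero (fun u hu v hv => ?_) μ
  simp only [mem_ofPred_eq, Classical.not_imp, not_not] at hu hv
  exact hf hu.1 hv.1 (hu.2.trans hv.2.symm)

theorem IntervalIntegrable.sq_sub {g : ℝ → ℝ} {μ : Measure ℝ} [IsLocallyFiniteMeasure μ]
    {a b : ℝ} (hg1 : IntervalIntegrable g μ a b)
    (hg2 : IntervalIntegrable (fun u => g u ^ 2) μ a b) (x : ℝ) :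
    IntervalIntegrable (fun u => (g u - x) ^ 2) μ a b := by
  have h := (hg2.sub (hg1.const_mul (2 * x))).add (intervalIntegrable_const (c := x ^ 2))
  convert h using 2
  ring

theorem integral_sq_sub_pos_of_injOn {g : ℝ → ℝ} {a b x : ℝ} (hab : a < b)
    (hg : InjOn g (Ioo a b)) (hi : IntervalIntegrable (fun u => (g u - x) ^ 2) volume a b) :
    0 < ∫ u in a..b, (g u - x) ^ 2 := by
  rw [intervalIntegral.integral_pos_iff_support_of_nonneg_ae
    (Filter.Eventually.of_forall fun u => sq_nonneg _) hi]
  refine ⟨hab, ((Measure.measure_Ioo_pos _).2 hab).trans_le (measure_mono_ae ?_)⟩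
  filter_upwards [hg.ae_ne x] with u hu hmem
  exact ⟨pow_ne_zero 2 (sub_ne_zero.2 (hu hmem)), Ioo_subset_Ioc_self hmem⟩

theorem mean_sq_sub_eq {g : ℝ → ℝ} {a b : ℝ} (hab : a ≠ b)
    (hg1 : IntervalIntegrable g volume a b)
    (hg2 : IntervalIntegrable (fun u => g u ^ 2) volume a b) (x : ℝ) :
    (b - a)⁻¹ * ∫ u in a..b, (g u - x) ^ 2 = x ^ 2 - 2 * x * trimC g 1 a b + trimC g 2 a b := by
  have hexpand : ∫ u in a..b, (g u - x) ^ 2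
      = (∫ u in a..b, g u ^ 2) - 2 * x * (∫ u in a..b, g u) + (b - a) * x ^ 2 := by
    have hsq : (fun u => (g u - x) ^ 2) = fun u => g u ^ 2 - 2 * x * g u + x ^ 2 := by
      funext u; ring
    rw [hsq, intervalIntegral.integral_add (hg2.sub (hg1.const_mul _)) intervalIntegrable_const,
      intervalIntegral.integral_sub hg2 (hg1.const_mul _), intervalIntegral.integral_const_mul,
      intervalIntegral.integral_const, smul_eq_mul]
  have hba : b - a ≠ 0 := sub_ne_zero.2 hab.symm
  simp only [trimC, pow_one, hexpand]
  field_simp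
  ring

/-- Positivity of `η(a_i, b̄_j) = c₁(a_i,b̄_i)² - 2c₁(a_i,b̄_i)c₁(a_j,b̄_j) + c₂(a_j,b̄_j)`
for a strictly increasing quantile function `g` and trimming proportions
`0 ≤ a_j ≤ a_i < b̄_j ≤ b̄_i ≤ 1`. -/
theorem eta_pos (g : ℝ → ℝ)
    (hmono : StrictMonoOn g (Ioo 0 1))
    (hint1 : IntegrableOn g (Ioo 0 1))
    (hint2 : IntegrableOn (fun u => (g u) ^ 2) (Ioo 0 1))
    (aj ai bj bi : ℝ)
    (h0 : 0 ≤ aj) (h1 : aj ≤ ai) (h2 : ai < 1 - bj) (h3 : 1 - bj ≤ 1 - bi)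
    (h4 : 1 - bi ≤ 1) :
    0 < (trimC g 1 ai (1 - bi)) ^ 2
        - 2 * trimC g 1 ai (1 - bi) * trimC g 1 aj (1 - bj)
        + trimC g 2 aj (1 - bj) := by
  have hab : aj < 1 - bj := h1.trans_lt h2
  have hsub : Ioo aj (1 - bj) ⊆ Ioo 0 1 := Ioo_subset_Ioo h0 (h3.trans h4)
  have hinterval {f : ℝ → ℝ} (hf : IntegrableOn f (Ioo 0 1)) : IntervalIntegrable f volume aj (1 - bj) :=
    (intervalIntegrable_iff_integrableOn_Ioo_of_le hab.le).2 (hf.mono_set hsub)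
  rw [← mean_sq_sub_eq hab.ne (hinterval hint1) (hinterval hint2)]
  exact mul_pos (inv_pos.2 (sub_pos.2 hab)) (integral_sq_sub_pos_of_injOn hab
    (hmono.injOn.mono hsub) ((hinterval hint1).sq_sub (hinterval hint2) _))
end

section
/- Let g : (0,1) → ℝ be strictly increasing with g and g² integrable on (0,1), and define c_k(a,b) := (1/(b−a)) ∫_a^b g(u)^k du. Suppose 0 ≤ a_j ≤ a_i < b̄_j ≤ b̄_i ≤ 1 (writing v̄ := 1 − v), and set η(a_i, b̄_j) := c₁(a_i, b̄_i)² − 2·c₁(a_i, b̄_i)·c₁(a_j, b̄_j) + c₂(a_j, b̄_j) and η(a_j, b̄_j) := c₂(a_j, b̄_j) − c₁(a_j, b̄_j)². Then the ratio η_r := η(a_j, b̄_j) / η(a_i, b̄_j) satisfies 0 < η_r ≤ 1. -/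
open MeasureTheory Set

/-!
`η(a_i, b̄_j) - η(a_j, b̄_j) = (c₁(a_i, b̄_i) - c₁(a_j, b̄_j))² ≥ 0`, so it suffices that
`η(a_j, b̄_j)` is positive. It is the variance of `g` on `(a_j, b̄_j)` under the uniform
distribution, i.e. `(b̄_j - a_j)⁻¹ ∫ (g - c₁)²`, and a strictly monotone `g` takes each value at
most once, so `(g - c₁)²` vanishes on a null set only.
-/

section Variance

variable {X : Type*} [MeasurableSpace X] {μ : Measure X} {s : Set X} {f : X → ℝ}

theorem setIntegral_sub_const_sq (hs : μ s ≠ ⊤) (hf : IntegrableOn f s μ)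
    (hf2 : IntegrableOn (fun x => f x ^ 2) s μ) (c : ℝ) :
    ∫ x in s, (f x - c) ^ 2 ∂μ =
      ∫ x in s, f x ^ 2 ∂μ - 2 * c * ∫ x in s, f x ∂μ + c ^ 2 * μ.real s := by
  have hlin : IntegrableOn (fun x => f x ^ 2 - 2 * c * f x) s μ := hf2.sub (hf.const_mul _)
  calc ∫ x in s, (f x - c) ^ 2 ∂μ = ∫ x in s, (f x ^ 2 - 2 * c * f x) + c ^ 2 ∂μ := by
        congr 1; ext x; ring
    _ = _ := by
        rw [integral_add hlin (integrableOn_const hs), integral_sub hf2 (hf.const_mul _),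
          integral_const_mul, setIntegral_const, smul_eq_mul, mul_comm (μ.real s)]

theorem setIntegral_sub_const_sq_pos [NullSingletonClass μ] (hs : 0 < μ s) (hinj : InjOn f s)
    (c : ℝ) (hint : IntegrableOn (fun x => (f x - c) ^ 2) s μ) :
    0 < ∫ x in s, (f x - c) ^ 2 ∂μ := by
  rw [setIntegral_pos_iff_support_of_nonneg_ae (.of_forall fun _ => sq_nonneg _) hint]
  have hlevel : μ {x ∈ s | f x = c} = 0 :=
    Subsingleton.measure_zero (fun x hx y hy => hinj hx.1 hy.1 (hx.2.trans hy.2.symm)) μ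
  calc 0 < μ (s \ {x ∈ s | f x = c}) := by rwa [measure_sdiff_null hlevel]
    _ ≤ μ (Function.support (fun x => (f x - c) ^ 2) ∩ s) := by
        refine measure_mono fun x ⟨hxs, hx⟩ => ⟨?_, hxs⟩
        simpa [Function.mem_support, sub_eq_zero] using fun h => hx ⟨hxs, h⟩

end Variance

theorem trimC_eq_setIntegral (g : ℝ → ℝ) (k : ℕ) {a b : ℝ} (hab : a ≤ b) :
    trimC g k a b = (b - a)⁻¹ * ∫ u in Ioo a b, g u ^ k := by
  rw [trimC, intervalIntegral.integral_of_le hab, integral_Ioc_eq_integral_Ioo]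

theorem trimC_two_sub_sq_pos {g : ℝ → ℝ} {a b : ℝ} (hab : a < b) (hinj : InjOn g (Ioo a b))
    (hg : IntegrableOn g (Ioo a b)) (hg2 : IntegrableOn (fun u => g u ^ 2) (Ioo a b)) :
    0 < trimC g 2 a b - trimC g 1 a b ^ 2 := by
  set m := trimC g 1 a b
  have hvol : volume.real (Ioo a b) = b - a := Real.volume_real_Ioo_of_le hab.le
  have hm : m = (b - a)⁻¹ * ∫ u in Ioo a b, g u := by
    simp only [m, trimC_eq_setIntegral g 1 hab.le, pow_one]
  have hvar : trimC g 2 a b - m ^ 2 = (b - a)⁻¹ * ∫ u in Ioo a b, (g u - m) ^ 2 := by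
    rw [setIntegral_sub_const_sq measure_Ioo_lt_top.ne hg hg2, hvol,
      trimC_eq_setIntegral g 2 hab.le, hm]
    field_simp [(sub_pos.mpr hab).ne']
    ring
  have hsq : IntegrableOn (fun u => (g u - m) ^ 2) (Ioo a b) := by
    refine ((hg2.add (integrableOn_const (C := m ^ 2) measure_Ioo_lt_top.ne)).sub
      (hg.const_mul (2 * m))).congr_fun (fun u _ => ?_) measurableSet_Ioo
    simp only [Pi.add_apply, Pi.sub_apply]
    ring
  rw [hvar]
  exact mul_pos (inv_pos.mpr (sub_pos.mpr hab))
    (setIntegral_sub_const_sq_pos (by simpa using hab) hinj m hsq)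

/-- The ratio `η_r = η(a_j,b̄_j)/η(a_i,b̄_j)` satisfies `0 < η_r ≤ 1` for a strictly
increasing quantile function `g` and trimming proportions
`0 ≤ a_j ≤ a_i < b̄_j ≤ b̄_i ≤ 1`. -/
theorem eta_ratio_mem_Ioc (g : ℝ → ℝ)
    (hmono : StrictMonoOn g (Ioo 0 1))
    (hint1 : IntegrableOn g (Ioo 0 1))
    (hint2 : IntegrableOn (fun u => (g u) ^ 2) (Ioo 0 1))
    (aj ai bj bi : ℝ)
    (h0 : 0 ≤ aj) (h1 : aj ≤ ai) (h2 : ai < 1 - bj) (h3 : 1 - bj ≤ 1 - bi)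
    (h4 : 1 - bi ≤ 1)
    (ηij ηjj ηr : ℝ)
    (hηij : ηij = (trimC g 1 ai (1 - bi)) ^ 2
        - 2 * trimC g 1 ai (1 - bi) * trimC g 1 aj (1 - bj)
        + trimC g 2 aj (1 - bj))
    (hηjj : ηjj = trimC g 2 aj (1 - bj) - (trimC g 1 aj (1 - bj)) ^ 2)
    (hηr : ηr = ηjj / ηij) :
    0 < ηr ∧ ηr ≤ 1 := by
  have hsub : Ioo aj (1 - bj) ⊆ Ioo 0 1 := Ioo_subset_Ioo h0 (h3.trans h4)
  have hηjj_pos : 0 < ηjj := hηjj ▸ trimC_two_sub_sq_pos (h1.trans_lt h2)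
    (hmono.injOn.mono hsub) (hint1.mono_set hsub) (hint2.mono_set hsub)
  have hηij_eq : ηij = ηjj + (trimC g 1 ai (1 - bi) - trimC g 1 aj (1 - bj)) ^ 2 := by
    rw [hηij, hηjj]; ring
  have hle : ηjj ≤ ηij := hηij_eq ▸ le_add_of_nonneg_right (sq_nonneg _)
  have hηij_pos : 0 < ηij := hηjj_pos.trans_le hle
  rw [hηr]
  exact ⟨div_pos hηjj_pos hηij_pos, (div_le_one₀ hηij_pos).mpr hle⟩
end

section
/- Let g : (0,1) → ℝ be strictly increasing with g and g² integrable on (0,1), and define c_k(a,b) := (1/(b−a)) ∫_a^b g(u)^k du. Suppose 0 ≤ a_j ≤ a_i < b̄_j ≤ b̄_i ≤ 1 (writing v̄ := 1 − v), and set η(a_i, b̄_j) := c₁(a_i, b̄_i)² − 2·c₁(a_i, b̄_i)·c₁(a_j, b̄_j) + c₂(a_j, b̄_j), η(a_j, b̄_j) := c₂(a_j, b̄_j) − c₁(a_j, b̄_j)², and η_r := η(a_j, b̄_j)/η(a_i, b̄_j). Then c₂(a_j, b̄_j) ≥ η_r · c₁(a_i, b̄_i)². -/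
open MeasureTheory Set

/-
Jensen's inequality gives `c₁(a_j, b̄_j)² ≤ c₂(a_j, b̄_j)`. Writing `x = c₁(a_i, b̄_i)`,
`m = c₁(a_j, b̄_j)` and `s = c₂(a_j, b̄_j)`, this makes `η(a_i, b̄_j) = (x - m)² + (s - m²)`
nonnegative. If it is positive, the claim `(s - m²) x² ≤ s · η(a_i, b̄_j)` follows from the identity
`s · η(a_i, b̄_j) - (s - m²) x² = (s - x m)²`; if it vanishes, `η_r = 0` by the convention `y / 0 = 0`
and the claim is `0 ≤ s`.
-/

lemma trimC_eq_intervalAverage (g : ℝ → ℝ) (k : ℕ) (a b : ℝ) :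
    trimC g k a b = ⨍ u in a..b, g u ^ k := by
  rw [interval_average_eq, smul_eq_mul, trimC]

lemma sq_setAverage_le_setAverage_sq {α : Type*} [MeasurableSpace α] {μ : Measure α}
    {t : Set α} {f : α → ℝ} (h0 : μ t ≠ 0) (ht : μ t ≠ ⊤)
    (hf : IntegrableOn f t μ) (hf2 : IntegrableOn (fun x => f x ^ 2) t μ) :
    (⨍ x in t, f x ∂μ) ^ 2 ≤ ⨍ x in t, f x ^ 2 ∂μ :=
  (even_two.convexOn_pow).map_set_average_le (continuous_pow 2).continuousOn isClosed_univ
    h0 ht (.of_forall fun _ => mem_univ _) hf hf2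

lemma sq_trimC_one_le_trimC_two {g : ℝ → ℝ} {a b : ℝ} (hab : a < b)
    (hg : IntegrableOn g (Ioo a b)) (hg2 : IntegrableOn (fun u => g u ^ 2) (Ioo a b)) :
    trimC g 1 a b ^ 2 ≤ trimC g 2 a b := by
  simp only [trimC_eq_intervalAverage, pow_one, uIoc_of_le hab.le]
  rw [← integrableOn_Ioc_iff_integrableOn_Ioo] at hg hg2
  exact sq_setAverage_le_setAverage_sq (by simp [hab]) (by simp) hg hg2

lemma div_mul_sq_le_of_sq_le {x m s : ℝ} (h : m ^ 2 ≤ s) :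
    (s - m ^ 2) / (x ^ 2 - 2 * x * m + s) * x ^ 2 ≤ s := by
  have hη : 0 ≤ x ^ 2 - 2 * x * m + s := by nlinarith [sq_nonneg (x - m)]
  rcases hη.eq_or_lt with hη | hη
  · rw [← hη, div_zero, zero_mul]
    exact (sq_nonneg m).trans h
  · rw [div_mul_eq_mul_div, div_le_iff₀ hη]
    nlinarith [sq_nonneg (s - x * m)]

theorem c2_ge_etaR_mul_c1_sq_general (g : ℝ → ℝ)
    (hint1 : IntegrableOn g (Ioo 0 1))
    (hint2 : IntegrableOn (fun u => (g u) ^ 2) (Ioo 0 1))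
    (aj ai bj bi : ℝ)
    (h0 : 0 ≤ aj) (h1 : aj ≤ ai) (h2 : ai < 1 - bj) (h3 : 1 - bj ≤ 1 - bi)
    (h4 : 1 - bi ≤ 1)
    (ηij ηjj ηr : ℝ)
    (hηij : ηij = (trimC g 1 ai (1 - bi)) ^ 2
        - 2 * trimC g 1 ai (1 - bi) * trimC g 1 aj (1 - bj)
        + trimC g 2 aj (1 - bj))
    (hηjj : ηjj = trimC g 2 aj (1 - bj) - (trimC g 1 aj (1 - bj)) ^ 2)
    (hηr : ηr = ηjj / ηij) :
    ηr * (trimC g 1 ai (1 - bi)) ^ 2 ≤ trimC g 2 aj (1 - bj) := by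
  have hsub : Ioo aj (1 - bj) ⊆ Ioo 0 1 := Ioo_subset_Ioo h0 (h3.trans h4)
  have hjensen := sq_trimC_one_le_trimC_two (h1.trans_lt h2)
    (hint1.mono_set hsub) (hint2.mono_set hsub)
  subst hηr hηij hηjj
  exact div_mul_sq_le_of_sq_le hjensen

/-- `c₂(a_j,b̄_j) ≥ η_r · c₁(a_i,b̄_i)²` for a strictly increasing quantile function `g`
and trimming proportions `0 ≤ a_j ≤ a_i < b̄_j ≤ b̄_i ≤ 1`. -/
theorem c2_ge_etaR_mul_c1_sq (g : ℝ → ℝ)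
    (hmono : StrictMonoOn g (Ioo 0 1))
    (hint1 : IntegrableOn g (Ioo 0 1))
    (hint2 : IntegrableOn (fun u => (g u) ^ 2) (Ioo 0 1))
    (aj ai bj bi : ℝ)
    (h0 : 0 ≤ aj) (h1 : aj ≤ ai) (h2 : ai < 1 - bj) (h3 : 1 - bj ≤ 1 - bi)
    (h4 : 1 - bi ≤ 1)
    (ηij ηjj ηr : ℝ)
    (hηij : ηij = (trimC g 1 ai (1 - bi)) ^ 2
        - 2 * trimC g 1 ai (1 - bi) * trimC g 1 aj (1 - bj)
        + trimC g 2 aj (1 - bj))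
    (hηjj : ηjj = trimC g 2 aj (1 - bj) - (trimC g 1 aj (1 - bj)) ^ 2)
    (hηr : ηr = ηjj / ηij) :
    ηr * (trimC g 1 ai (1 - bi)) ^ 2 ≤ trimC g 2 aj (1 - bj) :=
  c2_ge_etaR_mul_c1_sq_general g hint1 hint2 aj ai bj bi h0 h1 h2 h3 h4 ηij ηjj ηr hηij hηjj hηr
end

section
/- Let g : (0,1) → ℝ be strictly increasing with g and g² integrable on (0,1), define c_k(a,b) := (1/(b−a)) ∫_a^b g(u)^k du, and suppose 0 ≤ a₂ ≤ a₁ < b̄₂ ≤ b̄₁ ≤ 1 (writing v̄ := 1 − v). Set η(a₁, b̄₂) := c₁(a₁, b̄₁)² − 2·c₁(a₁, b̄₁)·c₁(a₂, b̄₂) + c₂(a₂, b̄₂), η(a₂, b̄₂) := c₂(a₂, b̄₂) − c₁(a₂, b̄₂)², and η_r := η(a₂, b̄₂)/η(a₁, b̄₂). For any real θ and σ, define the population trimmed moments T₁ := θ + σ·c₁(a₁, b̄₁) and T₂ := θ² + 2θσ·c₁(a₂, b̄₂) + σ²·c₂(a₂, b̄₂). Then T₂ − η_r·T₁² ≥ 0.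 -/
/-!
Write `B = c₁(a₂,b̄₂)`, `V = c₂(a₂,b̄₂) - B²`, `d = c₁(a₁,b̄₁) - B` and `x = θ + σB`.
Then `V ≥ 0` is the variance of `g` on `(a₂, b̄₂)`, and `T₁ = x + σd`, `T₂ = x² + σ²V`,
`η(a₁,b̄₂) = d² + V`, `η(a₂,b̄₂) = V`. The claim `V (x + σd)² ≤ (x² + σ²V)(d² + V)` is the
Cauchy–Schwarz inequality for `(x, σ√V)` and `(√V, d)`; the gap is exactly `(xd - σV)²`.
-/

open MeasureTheory Set

theorem MeasureTheory.IntegrableOn.intervalIntegrable_of_mem_Icc {E : Type*}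
    [NormedAddCommGroup E] {f : ℝ → E} {l r a b : ℝ} (hf : IntegrableOn f (Ioo l r))
    (ha : a ∈ Icc l r) (hb : b ∈ Icc l r) : IntervalIntegrable f volume a b :=
  ((integrableOn_Icc_iff_integrableOn_Ioo).mpr hf
    |>.mono_set (uIcc_subset_Icc ha hb)).intervalIntegrable

theorem trimC_two_sub_trimC_one_sq (g : ℝ → ℝ) (a b : ℝ)
    (h1 : IntervalIntegrable g volume a b)
    (h2 : IntervalIntegrable (fun u => g u ^ 2) volume a b) :
    trimC g 2 a b - trimC g 1 a b ^ 2 = (b - a)⁻¹ * ∫ u in a..b, (g u - trimC g 1 a b) ^ 2 := by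
  set m := trimC g 1 a b
  have hexpand : (∫ u in a..b, (g u - m) ^ 2)
      = (∫ u in a..b, g u ^ 2) - 2 * m * (∫ u in a..b, g u) + (b - a) * m ^ 2 := by
    simp only [sub_sq, mul_right_comm 2 _ m]
    rw [intervalIntegral.integral_add (h2.sub (h1.const_mul _)) intervalIntegrable_const,
      intervalIntegral.integral_sub h2 (h1.const_mul _), intervalIntegral.integral_const_mul,
      intervalIntegral.integral_const, smul_eq_mul]
  rcases eq_or_ne (b - a) 0 with hab | hab
  · simp [m, trimC, hab]
  · have hm : m = (b - a)⁻¹ * ∫ u in a..b, g u := by simp [m, trimC]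
    rw [hexpand, hm, trimC]
    field_simp
    ring

theorem trimC_one_sq_le_trimC_two (g : ℝ → ℝ) {a b : ℝ} (hab : a ≤ b)
    (h1 : IntervalIntegrable g volume a b)
    (h2 : IntervalIntegrable (fun u => g u ^ 2) volume a b) :
    trimC g 1 a b ^ 2 ≤ trimC g 2 a b := by
  rw [← sub_nonneg, trimC_two_sub_trimC_one_sq g a b h1 h2]
  exact mul_nonneg (inv_nonneg.mpr (sub_nonneg.mpr hab))
    (intervalIntegral.integral_nonneg hab fun u _ => sq_nonneg _)

theorem div_add_mul_sq_le {V d x s : ℝ} (hV : 0 ≤ V) :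
    V / (d ^ 2 + V) * (x + s * d) ^ 2 ≤ x ^ 2 + s ^ 2 * V := by
  rcases (add_nonneg (sq_nonneg d) hV).eq_or_lt with hzero | hpos
  · rw [← hzero, div_zero, zero_mul]
    positivity
  · rw [div_mul_eq_mul_div, div_le_iff₀ hpos]
    linear_combination sq_nonneg (x * d - s * V)

theorem T2_sub_etaR_T1_sq_nonneg_general (g : ℝ → ℝ)
    (hint1 : IntegrableOn g (Ioo 0 1))
    (hint2 : IntegrableOn (fun u => (g u) ^ 2) (Ioo 0 1))
    (a1 a2 b1 b2 : ℝ)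
    (h0 : 0 ≤ a2) (h1 : a2 ≤ a1) (h2 : a1 < 1 - b2) (h3 : 1 - b2 ≤ 1 - b1)
    (h4 : 1 - b1 ≤ 1)
    (η12 η22 ηr : ℝ)
    (hη12 : η12 = (trimC g 1 a1 (1 - b1)) ^ 2
        - 2 * trimC g 1 a1 (1 - b1) * trimC g 1 a2 (1 - b2)
        + trimC g 2 a2 (1 - b2))
    (hη22 : η22 = trimC g 2 a2 (1 - b2) - (trimC g 1 a2 (1 - b2)) ^ 2)
    (hηr : ηr = η22 / η12)
    (θ σ : ℝ) (T1 T2 : ℝ)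
    (hT1 : T1 = θ + σ * trimC g 1 a1 (1 - b1))
    (hT2 : T2 = θ ^ 2 + 2 * θ * σ * trimC g 1 a2 (1 - b2)
        + σ ^ 2 * trimC g 2 a2 (1 - b2)) :
    0 ≤ T2 - ηr * T1 ^ 2 := by
  have hab : a2 ≤ 1 - b2 := (h1.trans_lt h2).le
  have ha : a2 ∈ Icc (0 : ℝ) 1 := ⟨h0, hab.trans (h3.trans h4)⟩
  have hb : 1 - b2 ∈ Icc (0 : ℝ) 1 := ⟨h0.trans hab, h3.trans h4⟩
  have hV : 0 ≤ trimC g 2 a2 (1 - b2) - trimC g 1 a2 (1 - b2) ^ 2 :=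
    sub_nonneg.mpr <| trimC_one_sq_le_trimC_two g hab
      (hint1.intervalIntegrable_of_mem_Icc ha hb) (hint2.intervalIntegrable_of_mem_Icc ha hb)
  have key := div_add_mul_sq_le (d := trimC g 1 a1 (1 - b1) - trimC g 1 a2 (1 - b2))
    (x := θ + σ * trimC g 1 a2 (1 - b2)) (s := σ) hV
  rw [hηr, hη22, hη12, hT1, hT2]
  convert sub_nonneg.mpr key using 2 <;> ring

/-- For the location-scale population trimmed moments
`T₁ = θ + σ·c₁(a₁,b̄₁)` and `T₂ = θ² + 2θσ·c₁(a₂,b̄₂) + σ²·c₂(a₂,b̄₂)`, one has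
`T₂ - η_r·T₁² ≥ 0` for any real `θ` and `σ`, with
`η_r = η(a₂,b̄₂)/η(a₁,b̄₂)` and `0 ≤ a₂ ≤ a₁ < b̄₂ ≤ b̄₁ ≤ 1`. -/
theorem T2_sub_etaR_T1_sq_nonneg (g : ℝ → ℝ)
    (hmono : StrictMonoOn g (Ioo 0 1))
    (hint1 : IntegrableOn g (Ioo 0 1))
    (hint2 : IntegrableOn (fun u => (g u) ^ 2) (Ioo 0 1))
    (a1 a2 b1 b2 : ℝ)
    (h0 : 0 ≤ a2) (h1 : a2 ≤ a1) (h2 : a1 < 1 - b2) (h3 : 1 - b2 ≤ 1 - b1)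
    (h4 : 1 - b1 ≤ 1)
    (η12 η22 ηr : ℝ)
    (hη12 : η12 = (trimC g 1 a1 (1 - b1)) ^ 2
        - 2 * trimC g 1 a1 (1 - b1) * trimC g 1 a2 (1 - b2)
        + trimC g 2 a2 (1 - b2))
    (hη22 : η22 = trimC g 2 a2 (1 - b2) - (trimC g 1 a2 (1 - b2)) ^ 2)
    (hηr : ηr = η22 / η12)
    (θ σ : ℝ) (T1 T2 : ℝ)
    (hT1 : T1 = θ + σ * trimC g 1 a1 (1 - b1))
    (hT2 : T2 = θ ^ 2 + 2 * θ * σ * trimC g 1 a2 (1 - b2)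
        + σ ^ 2 * trimC g 2 a2 (1 - b2)) :
    0 ≤ T2 - ηr * T1 ^ 2 :=
  T2_sub_etaR_T1_sq_nonneg_general g hint1 hint2 a1 a2 b1 b2 h0 h1 h2 h3 h4 η12 η22 ηr hη12 hη22 hηr
    θ σ T1 T2 hT1 hT2
end

section
/- Define Δ(u) := log(−log u) for u ∈ (0,1) and κ_k(a,b) := (1/(b−a)) ∫_a^b Δ(u)^k du for 0 ≤ a < b ≤ 1 (the integrals exist since Δ^k is integrable on (0,1)). If the trimming proportions satisfy 0 ≤ a_j ≤ a_i < b̄_j ≤ b̄_i ≤ 1 (writing v̄ := 1 − v), then ζ(a_i, b̄_j) := κ₁(a_i, b̄_i)² − 2·κ₁(a_i, b̄_i)·κ₁(a_j, b̄_j) + κ₂(a_j, b̄_j) > 0. -/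
/-!
Writing `x = κ₁(a_i, b̄_i)` and `y = κ₁(a_j, b̄_j)`, we have
`ζ = (x - y)² + (κ₂(a_j, b̄_j) - y²)`, and the second term is the variance of `Δ` under the
uniform distribution on `(a_j, b̄_j)`. It is positive by the strict Jensen inequality, because
`Δ` is strictly decreasing and hence not a.e. constant. Finiteness of `κ₂` comes from
`(log x)² ≤ 4x + 16/√x` applied to `x = -log u ≥ 1 - u`.
-/

open MeasureTheory Set

open scoped Interval

/-- `Δ(u) = log(-log u)`. -/
noncomputable def DeltaF (u : ℝ) : ℝ := Real.log (-Real.log u)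

/-- `κ_k(a,b) = (1/(b-a)) ∫_a^b Δ(u)^k du`. -/
noncomputable def kappaF (k : ℕ) (a b : ℝ) : ℝ :=
  (b - a)⁻¹ * ∫ u in a..b, (DeltaF u) ^ k

theorem Real.sq_log_le {x : ℝ} (hx : 0 < x) :
    Real.log x ^ 2 ≤ 4 * x + 16 * x ^ (-(1 / 2 : ℝ)) := by
  have h4 : 0 ≤ x ^ (-(1 / 2 : ℝ)) := Real.rpow_nonneg hx.le _
  rcases le_or_gt 0 (Real.log x) with hlog | hlog
  · have hle := Real.log_le_rpow_div hx.le (ε := 1 / 2) (by norm_num)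
    have hsq : (x ^ (1 / 2 : ℝ)) ^ 2 = x := by
      rw [← Real.rpow_mul_natCast hx.le]; norm_num
    nlinarith
  · have hle := Real.log_le_rpow_div (inv_pos.2 hx).le (ε := 1 / 4) (by norm_num)
    rw [Real.log_inv, Real.inv_rpow hx.le, ← Real.rpow_neg hx.le] at hle
    have hsq : (x ^ (-(1 / 4 : ℝ))) ^ 2 = x ^ (-(1 / 2 : ℝ)) := by
      rw [← Real.rpow_mul_natCast hx.le]; norm_num
    nlinarith

theorem Set.InjOn.not_ae_eq_const {α β : Type*} [MeasurableSpace α] {μ : Measure α}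
    [NullSingletonClass μ] {f : α → β} {s : Set α} (hf : InjOn f s) (hs : MeasurableSet s)
    (hμs : μ s ≠ 0) (c : β) :
    ¬ f =ᵐ[μ.restrict s] fun _ => c := by
  intro h
  rw [Filter.EventuallyEq, ae_restrict_iff' hs] at h
  have hlevel : (s ∩ {x | f x = c}).Subsingleton :=
    fun x hx y hy => hf hx.1 hy.1 (hx.2.trans hy.2.symm)
  refine hμs (measure_mono_null_ae ?_ (hlevel.measure_zero μ))
  filter_upwards [h] with x hx hxs using ⟨hxs, hx hxs⟩

theorem sq_interval_average_lt_of_injOn {f : ℝ → ℝ} {a b : ℝ} (hab : a < b)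
    (hf : IntervalIntegrable f volume a b) (hf2 : IntervalIntegrable (fun x => f x ^ 2) volume a b)
    (hinj : InjOn f (Ioo a b)) :
    (⨍ x in a..b, f x) ^ 2 < ⨍ x in a..b, f x ^ 2 := by
  rw [uIoc_of_le hab.le]
  refine ((Even.strictConvexOn_pow even_two two_ne_zero).ae_eq_const_or_map_average_lt
    (continuous_pow 2).continuousOn isClosed_univ (by simp) hf.1 hf2.1).resolve_left ?_
  rw [Measure.restrict_congr_set Ioo_ae_eq_Ioc.symm]
  exact hinj.not_ae_eq_const measurableSet_Ioo (by simp [hab]) _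

theorem IntervalIntegrable.of_sq {f : ℝ → ℝ} {a b : ℝ}
    (hf : AEStronglyMeasurable f (volume.restrict (Ι a b)))
    (hf2 : IntervalIntegrable (fun x => f x ^ 2) volume a b) : IntervalIntegrable f volume a b :=
  (hf2.add (intervalIntegrable_const (c := 1))).mono_fun' hf <| ae_of_all _ fun x =>
    show |f x| ≤ f x ^ 2 + 1 by nlinarith [sq_abs (f x), sq_nonneg (|f x| - 1)]

theorem measurable_deltaF : Measurable DeltaF :=
  Real.measurable_log.comp Real.measurable_log.neg

theorem strictAntiOn_deltaF : StrictAntiOn DeltaF (Ioo 0 1) := fun _ hu _ hv huv =>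
  Real.log_lt_log (neg_pos.2 (Real.log_neg hv.1 hv.2)) (neg_lt_neg (Real.log_lt_log hu.1 huv))

theorem deltaF_sq_le {u : ℝ} (hu : u ∈ Ioo (0 : ℝ) 1) :
    DeltaF u ^ 2 ≤ 4 * -Real.log u + 16 * (1 - u) ^ (-(1 / 2 : ℝ)) := by
  have hpos : 0 < -Real.log u := neg_pos.2 (Real.log_neg hu.1 hu.2)
  have hge : 1 - u ≤ -Real.log u := by linarith [Real.log_le_sub_one_of_pos hu.1]
  have hrpow : (-Real.log u) ^ (-(1 / 2 : ℝ)) ≤ (1 - u) ^ (-(1 / 2 : ℝ)) :=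
    Real.rpow_le_rpow_of_nonpos (sub_pos.2 hu.2) hge (by norm_num)
  have := Real.sq_log_le hpos
  rw [DeltaF]
  linarith

theorem intervalIntegrable_deltaF_sq : IntervalIntegrable (fun u => DeltaF u ^ 2) volume 0 1 := by
  have hlog : IntervalIntegrable (fun u => 4 * -Real.log u) volume 0 1 :=
    intervalIntegral.intervalIntegrable_log'.neg.const_mul 4
  have hrpow : IntervalIntegrable (fun u : ℝ => (1 - u) ^ (-(1 / 2 : ℝ))) volume 0 1 := by
    have h := intervalIntegral.intervalIntegrable_rpow' (a := 0) (b := 1) (r := -(1 / 2))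
      (by norm_num)
    simpa using (h.comp_sub_left 1).symm
  refine (hlog.add (hrpow.const_mul 16)).mono_fun'
    (measurable_deltaF.pow_const 2).aestronglyMeasurable ?_
  rw [uIoc_of_le zero_le_one, Measure.restrict_congr_set Ioo_ae_eq_Ioc.symm]
  filter_upwards [ae_restrict_mem measurableSet_Ioo] with u hu
  rw [Real.norm_of_nonneg (sq_nonneg _)]
  exact deltaF_sq_le hu

theorem kappaF_eq_interval_average (k : ℕ) (a b : ℝ) :
    kappaF k a b = ⨍ u in a..b, DeltaF u ^ k := by
  rw [interval_average_eq, smul_eq_mul, kappaF]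

theorem sq_kappaF_one_lt_kappaF_two {a b : ℝ} (ha : 0 ≤ a) (hab : a < b) (hb : b ≤ 1) :
    kappaF 1 a b ^ 2 < kappaF 2 a b := by
  have hsub : uIcc a b ⊆ uIcc 0 1 := by
    rw [uIcc_of_le hab.le, uIcc_of_le zero_le_one]
    exact Icc_subset_Icc ha hb
  have hsq := intervalIntegrable_deltaF_sq.mono_set hsub
  simp only [kappaF_eq_interval_average, pow_one]
  exact sq_interval_average_lt_of_injOn hab
    (.of_sq measurable_deltaF.aestronglyMeasurable hsq) hsq
    (strictAntiOn_deltaF.injOn.mono (Ioo_subset_Ioo ha hb))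

/-- Positivity of `ζ(a_i,b̄_j) = κ₁(a_i,b̄_i)² - 2κ₁(a_i,b̄_i)κ₁(a_j,b̄_j) + κ₂(a_j,b̄_j)`
under the trimming inequality `0 ≤ a_j ≤ a_i < b̄_j ≤ b̄_i ≤ 1`. -/
theorem zeta_pos (aj ai bj bi : ℝ)
    (h0 : 0 ≤ aj) (h1 : aj ≤ ai) (h2 : ai < 1 - bj) (h3 : 1 - bj ≤ 1 - bi)
    (h4 : 1 - bi ≤ 1) :
    0 < (kappaF 1 ai (1 - bi)) ^ 2
        - 2 * kappaF 1 ai (1 - bi) * kappaF 1 aj (1 - bj)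
        + kappaF 2 aj (1 - bj) := by
  have hvar := sq_kappaF_one_lt_kappaF_two h0 (h1.trans_lt h2) (h3.trans h4)
  nlinarith [sq_nonneg (kappaF 1 ai (1 - bi) - kappaF 1 aj (1 - bj))]
end

section
/- Let κ₁⁽¹⁾, κ₁⁽²⁾, κ₂⁽²⁾, T₁, T₂ be real numbers, set ζ₁₂ := (κ₁⁽¹⁾)² − 2·κ₁⁽¹⁾·κ₁⁽²⁾ + κ₂⁽²⁾ and ζ₂₂ := κ₂⁽²⁾ − (κ₁⁽²⁾)², and suppose ζ₁₂ > 0 and set ζ_r := ζ₂₂/ζ₁₂. If β ∈ ℝ and σ > 0 satisfy the matching system T₁ = log σ − β·κ₁⁽¹⁾ and T₂ = (log σ)² − 2β·(log σ)·κ₁⁽²⁾ + β²·κ₂⁽²⁾, then T₂ − ζ_r·T₁² ≥ 0 and β = β_ST + β_FT or β = β_ST − β_FT, where β_FT := (1/√ζ₁₂)·√(T₂ − ζ_r·T₁²) and β_ST := T₁·(κ₁⁽²⁾ − κ₁⁽¹⁾)/ζ₁₂; moreover σ = exp(T₁ + β·κ₁⁽¹⁾). -/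
/-!
Substituting `log σ = T₁ + β κ₁⁽¹⁾` into the second equation and completing the square in `β`
gives `T₂ - ζ_r T₁² = ζ₁₂ (β - β_ST)²`. Hence the left side is nonnegative and
`β_FT = √(ζ₁₂ (β - β_ST)²) / √ζ₁₂ = |β - β_ST|`, so `β - β_ST = ±β_FT`.
-/

theorem trimmedLogMoment_residual_eq {κ11 κ12 κ22 L β T1 T2 ζ : ℝ}
    (hζ : ζ = κ11 ^ 2 - 2 * κ11 * κ12 + κ22) (hζ0 : ζ ≠ 0)
    (h1 : T1 = L - β * κ11) (h2 : T2 = L ^ 2 - 2 * β * L * κ12 + β ^ 2 * κ22) :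
    T2 - (κ22 - κ12 ^ 2) / ζ * T1 ^ 2 = ζ * (β - T1 * (κ12 - κ11) / ζ) ^ 2 := by
  subst h1 h2
  field_simp
  rw [hζ]
  ring

theorem one_div_sqrt_mul_sqrt_mul_sq {ζ : ℝ} (hζ : 0 < ζ) (x : ℝ) :
    1 / Real.sqrt ζ * Real.sqrt (ζ * x ^ 2) = |x| := by
  rw [Real.sqrt_mul hζ.le, Real.sqrt_sq_eq_abs, ← mul_assoc,
    one_div_mul_cancel (Real.sqrt_ne_zero'.mpr hζ), one_mul]

/-- Closed-form solution of the Fréchet trimmed log-moment matching system: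
if `T₁ = log σ - β·κ₁⁽¹⁾` and `T₂ = (log σ)² - 2β·(log σ)·κ₁⁽²⁾ + β²·κ₂⁽²⁾`, with
`ζ₁₂ > 0` and `σ > 0`, then `T₂ - ζ_r·T₁² ≥ 0`, `β = β_ST ± β_FT`, and
`σ = exp(T₁ + β·κ₁⁽¹⁾)`. -/
theorem frechet_MTM_closed_form
    (κ11 κ12 κ22 T1 T2 β σ : ℝ)
    (ζ12 ζ22 ζr βFT βST : ℝ)
    (hζ12 : ζ12 = κ11 ^ 2 - 2 * κ11 * κ12 + κ22)
    (hζ22 : ζ22 = κ22 - κ12 ^ 2)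
    (hpos : 0 < ζ12)
    (hζr : ζr = ζ22 / ζ12)
    (hFT : βFT = (1 / Real.sqrt ζ12) * Real.sqrt (T2 - ζr * T1 ^ 2))
    (hST : βST = T1 * (κ12 - κ11) / ζ12)
    (hσ : 0 < σ)
    (hm1 : T1 = Real.log σ - β * κ11)
    (hm2 : T2 = (Real.log σ) ^ 2 - 2 * β * Real.log σ * κ12 + β ^ 2 * κ22) :
    0 ≤ T2 - ζr * T1 ^ 2
      ∧ (β = βST + βFT ∨ β = βST - βFT)
      ∧ σ = Real.exp (T1 + β * κ11) := by
  have hres : T2 - ζr * T1 ^ 2 = ζ12 * (β - βST) ^ 2 := by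
    rw [hζr, hζ22, hST]
    exact trimmedLogMoment_residual_eq hζ12 hpos.ne' hm1 hm2
  have hFT' : βFT = |β - βST| := by
    rw [hFT, hres, one_div_sqrt_mul_sqrt_mul_sq hpos]
  refine ⟨hres ▸ by positivity, ?_, ?_⟩
  · rcases abs_choice (β - βST) with h | h
    · left; linarith
    · right; linarith
  · rw [show T1 + β * κ11 = Real.log σ by linarith, Real.exp_log hσ]
end

section
/- Let 0 ≤ a₁ < b̄₁ ≤ 1 with b̄₁ := 1 − b₁ and a₁ + b₁ < 1, and let G : [0,1] → ℝ be continuously differentiable on an open set containing [a₁, b̄₁]. With K(w,v) := min{w,v} − w·v, c_k := (1/(b̄₁ − a₁)) ∫_{a₁}^{b̄₁} G(u)^k du, and Γ := (1 − a₁ − b₁)^{−2}, the following identity holds: Γ·∫_{a₁}^{b̄₁} ∫_{a₁}^{b̄₁} K(w,v)·G'(v)·G'(w) dv dw = Γ·{ a₁(1−a₁)·G(a₁)² + b₁(1−b₁)·G(b̄₁)² − 2a₁b₁·G(a₁)·G(b̄₁) − 2(1 − a₁ − b₁)·[a₁·G(a₁) + b₁·G(b̄₁)]·c₁ − Γ^{−1}·c₁²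 + (1 − a₁ − b₁)·c₂ }. -/
/-!
Splitting the inner integral at `v = w` and integrating by parts on each piece shows that
`∫ (min w v - w v) G'(v) dv` equals `w ((1-b) G(b) + ∫ G) - (1-w) a G(a) - ∫_a^w G`, a function
of `w` with derivative `a G(a) + (1-b) G(b) + ∫ G - G(w)`. One more integration by parts against
`G'(w)` leaves only boundary terms, `(∫ G)²` and `∫ G²`; dividing by `b - a = 1 - a₁ - b₁` turns
the last two into `c₁` and `c₂`.
-/

open MeasureTheory Set intervalIntegral

section KernelIntegral

variable {G G' : ℝ → ℝ} {a b : ℝ}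

theorem hasDerivAt_integral_right_of_continuousOn {f : ℝ → ℝ} {x : ℝ}
    (hf : ContinuousOn f (Icc a b)) (hx : x ∈ Ioo a b) :
    HasDerivAt (fun t => ∫ u in a..t, f u) (f x) x :=
  integral_hasDerivAt_right
    ((hf.mono (Icc_subset_Icc le_rfl hx.2.le)).intervalIntegrable_of_Icc hx.1.le)
    ((hf.mono Ioo_subset_Icc_self).stronglyMeasurableAtFilter isOpen_Ioo x hx)
    (hf.continuousAt (Icc_mem_nhds hx.1 hx.2))

theorem integral_id_mul_deriv (hG : ∀ x ∈ uIcc a b, HasDerivAt G (G' x) x)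
    (hG' : IntervalIntegrable G' volume a b) :
    ∫ v in a..b, v * G' v = b * G b - a * G a - ∫ v in a..b, G v := by
  simpa using integral_mul_deriv_eq_deriv_mul (fun x _ => hasDerivAt_id x) hG
    intervalIntegrable_const hG'

theorem integral_one_sub_mul_deriv (hG : ∀ x ∈ uIcc a b, HasDerivAt G (G' x) x)
    (hG' : IntervalIntegrable G' volume a b) :
    ∫ v in a..b, (1 - v) * G' v = (1 - b) * G b - (1 - a) * G a + ∫ v in a..b, G v := by
  simpa using integral_mul_deriv_eq_deriv_mul (fun x _ => (hasDerivAt_id x).const_sub 1) hG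
    intervalIntegrable_const hG'

theorem integral_kernel_mul_deriv (hG : ∀ x ∈ Icc a b, HasDerivAt G (G' x) x)
    (hG' : IntervalIntegrable G' volume a b) {w : ℝ} (hw : w ∈ Icc a b) :
    ∫ v in a..b, (min w v - w * v) * G' v
      = w * ((1 - b) * G b + ∫ u in a..b, G u) - (1 - w) * (a * G a) - ∫ u in a..w, G u := by
  have hGc : ContinuousOn G (Icc a b) := HasDerivAt.continuousOn hG
  have ha : a ∈ Icc a b := left_mem_Icc.2 (hw.1.trans hw.2)
  have hb : b ∈ Icc a b := right_mem_Icc.2 (hw.1.trans hw.2)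
  have hsub_left : uIcc a w ⊆ Icc a b := uIcc_subset_Icc ha hw
  have hsub_right : uIcc w b ⊆ Icc a b := uIcc_subset_Icc hw hb
  have hG'_left : IntervalIntegrable G' volume a w := hG'.mono_set (hsub_left.trans Icc_subset_uIcc)
  have hG'_right : IntervalIntegrable G' volume w b :=
    hG'.mono_set (hsub_right.trans Icc_subset_uIcc)
  have hK : Continuous fun v => min w v - w * v := by fun_prop
  have hK_left : ∫ v in a..w, (min w v - w * v) * G' v = (1 - w) * ∫ v in a..w, v * G' v := by
    rw [← intervalIntegral.integral_const_mul]
    refine integral_congr fun v hv => ?_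
    rw [uIcc_of_le hw.1] at hv
    simp only [min_eq_right hv.2]; ring
  have hK_right : ∫ v in w..b, (min w v - w * v) * G' v = w * ∫ v in w..b, (1 - v) * G' v := by
    rw [← intervalIntegral.integral_const_mul]
    refine integral_congr fun v hv => ?_
    rw [uIcc_of_le hw.2] at hv
    simp only [min_eq_left hv.1]; ring
  have hG_split := integral_add_adjacent_intervals (μ := volume)
    (hGc.mono hsub_left).intervalIntegrable (hGc.mono hsub_right).intervalIntegrable
  rw [← integral_add_adjacent_intervals (hG'_left.continuousOn_mul hK.continuousOn)
      (hG'_right.continuousOn_mul hK.continuousOn), hK_left, hK_right,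
    integral_id_mul_deriv (fun x hx => hG x (hsub_left hx)) hG'_left,
    integral_one_sub_mul_deriv (fun x hx => hG x (hsub_right hx)) hG'_right, ← hG_split]
  ring

theorem integral_integral_kernel_mul_deriv_mul_deriv (hab : a ≤ b)
    (hG : ∀ x ∈ Icc a b, HasDerivAt G (G' x) x) (hG' : IntervalIntegrable G' volume a b) :
    ∫ w in a..b, ∫ v in a..b, (min w v - w * v) * G' v * G' w
      = a * (1 - a) * G a ^ 2 + b * (1 - b) * G b ^ 2 - 2 * a * (1 - b) * G a * G b
        - 2 * (a * G a + (1 - b) * G b) * (∫ u in a..b, G u) - (∫ u in a..b, G u) ^ 2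
        + ∫ u in a..b, G u ^ 2 := by
  set I := ∫ u in a..b, G u
  set C := a * G a + (1 - b) * G b + I
  set H : ℝ → ℝ := fun w => w * ((1 - b) * G b + I) - (1 - w) * (a * G a) - ∫ u in a..w, G u
  have hGc : ContinuousOn G (Icc a b) := HasDerivAt.continuousOn hG
  have hinner : ∫ w in a..b, ∫ v in a..b, (min w v - w * v) * G' v * G' w
      = ∫ w in a..b, H w * G' w := by
    refine integral_congr fun w hw => ?_
    rw [uIcc_of_le hab] at hw
    rw [intervalIntegral.integral_mul_const, integral_kernel_mul_deriv hG hG' hw]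
  have hGc' : ContinuousOn G (uIcc a b) := by rwa [uIcc_of_le hab]
  have hH : ContinuousOn H (uIcc a b) :=
    (Continuous.continuousOn (by fun_prop)).sub
      (continuousOn_primitive_interval hGc'.integrableOn_uIcc)
  have hH' : ∀ x ∈ Ioo (min a b) (max a b), HasDerivAt H (C - G x) x := by
    intro x hx
    rw [min_eq_left hab, max_eq_right hab] at hx
    exact ((((hasDerivAt_id x).mul_const ((1 - b) * G b + I)).sub
      (((hasDerivAt_id x).const_sub 1).mul_const (a * G a))).sub
      (hasDerivAt_integral_right_of_continuousOn hGc hx)).congr_deriv (by ring)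
  have hGG : ∫ x in a..b, (C - G x) * G x = C * I - ∫ u in a..b, G u ^ 2 := by
    rw [← intervalIntegral.integral_const_mul, ← integral_sub (g := fun x => G x ^ 2)
      (hGc'.intervalIntegrable.const_mul C) (hGc'.pow 2).intervalIntegrable]
    exact integral_congr fun x _ => by ring
  rw [hinner, integral_mul_deriv_eq_deriv_mul_of_hasDerivAt hH hGc' hH'
    (fun x hx => hG x (Ioo_subset_Icc_self (by simpa [hab] using hx)))
    (intervalIntegrable_const.sub hGc'.intervalIntegrable) hG', hGG]
  simp only [H, integral_same]
  ring

end KernelIntegral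

theorem Lambda111_closed_form_general (a1 b1 : ℝ)
    (h1 : a1 < 1 - b1)
    (G : ℝ → ℝ) (U : Set ℝ) (hU : IsOpen U) (hsub : Icc a1 (1 - b1) ⊆ U)
    (hG : ContDiffOn ℝ 1 G U)
    (Γ c1 c2 : ℝ)
    (hΓ : Γ = ((1 - a1 - b1) ^ 2)⁻¹)
    (hc1 : c1 = ((1 - b1) - a1)⁻¹ * ∫ u in a1..(1 - b1), G u)
    (hc2 : c2 = ((1 - b1) - a1)⁻¹ * ∫ u in a1..(1 - b1), (G u) ^ 2) :
    Γ * ∫ w in a1..(1 - b1), ∫ v in a1..(1 - b1),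
        (min w v - w * v) * deriv G v * deriv G w
      = Γ * ( a1 * (1 - a1) * (G a1) ^ 2
        + b1 * (1 - b1) * (G (1 - b1)) ^ 2
        - 2 * a1 * b1 * G a1 * G (1 - b1)
        - 2 * (1 - a1 - b1) * (a1 * G a1 + b1 * G (1 - b1)) * c1
        - Γ⁻¹ * c1 ^ 2
        + (1 - a1 - b1) * c2 ) := by
  have hlen : 1 - a1 - b1 ≠ 0 := by linarith
  have hderiv : ∀ x ∈ Icc a1 (1 - b1), HasDerivAt G (deriv G x) x := fun x hx =>
    ((hG.contDiffAt (hU.mem_nhds (hsub hx))).differentiableAt one_ne_zero).hasDerivAt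
  have hderiv_int : IntervalIntegrable (deriv G) volume a1 (1 - b1) :=
    ((hG.continuousOn_deriv_of_isOpen hU le_rfl).mono hsub).intervalIntegrable_of_Icc h1.le
  rw [integral_integral_kernel_mul_deriv_mul_deriv h1.le hderiv hderiv_int, hΓ, hc1, hc2,
    show 1 - b1 - a1 = 1 - a1 - b1 by ring]
  field_simp
  ring

/-- Closed-form expression `Λ₁₁₁` for the asymptotic variance of the first trimmed
moment: single-integration formula for
`Γ·∫∫ K(w,v) G'(v) G'(w) dv dw` over `[a₁,b̄₁]²`. -/
theorem Lambda111_closed_form (a1 b1 : ℝ)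
    (h0 : 0 ≤ a1) (h1 : a1 < 1 - b1) (h2 : 1 - b1 ≤ 1) (hab : a1 + b1 < 1)
    (G : ℝ → ℝ) (U : Set ℝ) (hU : IsOpen U) (hsub : Icc a1 (1 - b1) ⊆ U)
    (hG : ContDiffOn ℝ 1 G U)
    (Γ c1 c2 : ℝ)
    (hΓ : Γ = ((1 - a1 - b1) ^ 2)⁻¹)
    (hc1 : c1 = ((1 - b1) - a1)⁻¹ * ∫ u in a1..(1 - b1), G u)
    (hc2 : c2 = ((1 - b1) - a1)⁻¹ * ∫ u in a1..(1 - b1), (G u) ^ 2) :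
    Γ * ∫ w in a1..(1 - b1), ∫ v in a1..(1 - b1),
        (min w v - w * v) * deriv G v * deriv G w
      = Γ * ( a1 * (1 - a1) * (G a1) ^ 2
        + b1 * (1 - b1) * (G (1 - b1)) ^ 2
        - 2 * a1 * b1 * G a1 * G (1 - b1)
        - 2 * (1 - a1 - b1) * (a1 * G a1 + b1 * G (1 - b1)) * c1
        - Γ⁻¹ * c1 ^ 2
        + (1 - a1 - b1) * c2 ) :=
  Lambda111_closed_form_general a1 b1 h1 G U hU hsub hG Γ c1 c2 hΓ hc1 hc2
end

section
/- Let 0 ≤ a₂ < b̄₂ ≤ 1 with b̄₂ := 1 − b₂ and a₂ + b₂ < 1, and let G : [0,1] → ℝ be continuously differentiable on an open set containing [a₂, b̄₂]. With K(w,v) := min{w,v} − w·v, c_k := (1/(b̄₂ − a₂)) ∫_{a₂}^{b̄₂} G(u)^k du, and Γ := (1 − a₂ − b₂)^{−2}, the following identity holds: Γ·∫_{a₂}^{b̄₂} ∫_{a₂}^{b̄₂} K(w,v)·G(w)·G(v)·G'(v)·G'(w) dv dw = (Γ/4)·{ a₂(1−a₂)·G(a₂)⁴ + b₂(1−b₂)·G(b̄₂)⁴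 − 2a₂b₂·G(a₂)²·G(b̄₂)² − 2(1 − a₂ − b₂)·[a₂·G(a₂)² + b₂·G(b̄₂)²]·c₂ − Γ^{−1}·c₂² + (1 − a₂ − b₂)·c₄ }. -/
/-!
With `F = G² / 2` and `f = F' = G G'`, the double integral is `∫∫ (min(w, v) - w v) f(w) f(v)`.
For fixed `w`, splitting the `v`-integral at `v = w` and integrating `v f(v)` by parts expresses
it through `F` and the primitive `Φ(w) = ∫ₐʷ F`. In the outer integral a second integration by
parts (`Φ' = F`, `F' = f`) turns `∫ Φ f` into `Φ(b) F(b) - ∫ₐᵇ F²`. Since `∫ₐᵇ F` and `∫ₐᵇ F²`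
are `(b - a) c₂ / 2` and `(b - a) c₄ / 4`, what remains is algebra.
-/

open MeasureTheory Set intervalIntegral

section KernelIntegral

variable {a b w : ℝ} {F f : ℝ → ℝ}

theorem integral_id_mul_eq_of_hasDerivAt (hab : a ≤ b) (hFc : ContinuousOn F (Icc a b))
    (hF : ∀ x ∈ Ioo a b, HasDerivAt F (f x) x) (hf : IntervalIntegrable f volume a b) :
    ∫ x in a..b, x * f x = b * F b - a * F a - ∫ x in a..b, F x := by
  simpa using integral_mul_deriv_eq_deriv_mul_of_hasDerivAt (continuousOn_id' _)
    (by rwa [uIcc_of_le hab]) (fun x _ => hasDerivAt_id x)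
    (fun x hx => hF x (by rwa [min_eq_left hab, max_eq_right hab] at hx))
    intervalIntegrable_const hf

theorem integral_min_mul_eq_of_hasDerivAt (hw : w ∈ Icc a b) (hFc : ContinuousOn F (Icc a b))
    (hF : ∀ x ∈ Ioo a b, HasDerivAt F (f x) x) (hf : IntervalIntegrable f volume a b) :
    ∫ v in a..b, min w v * f v = w * F b - a * F a - ∫ v in a..w, F v := by
  have hfl : IntervalIntegrable f volume a w := hf.mono_set (by
    rw [uIcc_of_le hw.1, uIcc_of_le (hw.1.trans hw.2)]; exact Icc_subset_Icc_right hw.2)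
  have hfr : IntervalIntegrable f volume w b := hf.mono_set (by
    rw [uIcc_of_le hw.2, uIcc_of_le (hw.1.trans hw.2)]; exact Icc_subset_Icc_left hw.1)
  have hmin : Continuous fun v => min w v := continuous_const.min continuous_id'
  have hleft : ∫ v in a..w, min w v * f v = ∫ v in a..w, v * f v :=
    integral_congr fun v hv => by
      rw [uIcc_of_le hw.1] at hv
      simp only [min_eq_right hv.2]
  have hright : ∫ v in w..b, min w v * f v = ∫ v in w..b, w * f v :=
    integral_congr fun v hv => by
      rw [uIcc_of_le hw.2] at hv
      simp only [min_eq_left hv.1]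
  rw [← integral_add_adjacent_intervals (hfl.continuousOn_mul hmin.continuousOn)
      (hfr.continuousOn_mul hmin.continuousOn), hleft, hright,
    intervalIntegral.integral_const_mul,
    integral_id_mul_eq_of_hasDerivAt hw.1 (hFc.mono (Icc_subset_Icc_right hw.2))
      (fun x hx => hF x ⟨hx.1, hx.2.trans_le hw.2⟩) hfl,
    integral_eq_sub_of_hasDerivAt_of_le hw.2 (hFc.mono (Icc_subset_Icc_left hw.1))
      (fun x hx => hF x ⟨hw.1.trans_lt hx.1, hx.2⟩) hfr]
  ring

theorem integral_min_sub_mul_mul_eq_of_hasDerivAt (hw : w ∈ Icc a b)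
    (hFc : ContinuousOn F (Icc a b)) (hF : ∀ x ∈ Ioo a b, HasDerivAt F (f x) x)
    (hf : IntervalIntegrable f volume a b) :
    ∫ v in a..b, (min w v - w * v) * f v
      = (F b - (b * F b - a * F a - ∫ x in a..b, F x)) * w - a * F a - ∫ v in a..w, F v := by
  have hmin : IntervalIntegrable (fun v => min w v * f v) volume a b :=
    hf.continuousOn_mul (continuous_const.min continuous_id').continuousOn
  have hid : IntervalIntegrable (fun v => v * f v) volume a b :=
    hf.continuousOn_mul (continuousOn_id' _)
  rw [show (fun v => (min w v - w * v) * f v) = fun v => min w v * f v - w * (v * f v) from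
      funext fun v => by ring,
    intervalIntegral.integral_sub hmin (hid.const_mul w), intervalIntegral.integral_const_mul,
    integral_min_mul_eq_of_hasDerivAt hw hFc hF hf,
    integral_id_mul_eq_of_hasDerivAt (hw.1.trans hw.2) hFc hF hf]
  ring

theorem integral_primitive_mul_eq_of_hasDerivAt (hab : a ≤ b) (hFc : ContinuousOn F (Icc a b))
    (hF : ∀ x ∈ Ioo a b, HasDerivAt F (f x) x) (hf : IntervalIntegrable f volume a b) :
    ∫ w in a..b, (∫ v in a..w, F v) * f w
      = (∫ v in a..b, F v) * F b - ∫ v in a..b, F v ^ 2 := by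
  have hΦ : ∀ x ∈ Ioo (min a b) (max a b),
      HasDerivAt (fun w => ∫ v in a..w, F v) (F x) x := by
    intro x hx
    rw [min_eq_left hab, max_eq_right hab] at hx
    exact integral_hasDerivAt_right
      ((hFc.mono (Icc_subset_Icc_right hx.2.le)).intervalIntegrable_of_Icc hx.1.le)
      ((hFc.mono Ioo_subset_Icc_self).stronglyMeasurableAtFilter isOpen_Ioo x hx)
      (hFc.continuousAt (Icc_mem_nhds hx.1 hx.2))
  rw [← uIcc_of_le hab] at hFc
  simpa [sq] using integral_mul_deriv_eq_deriv_mul_of_hasDerivAt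
    (continuousOn_primitive_interval (hFc.integrableOn_compact isCompact_uIcc)) hFc hΦ
    (fun x hx => hF x (by rwa [min_eq_left hab, max_eq_right hab] at hx))
    hFc.intervalIntegrable hf

theorem integral_integral_min_sub_mul_mul_eq_of_hasDerivAt (hab : a ≤ b)
    (hFc : ContinuousOn F (Icc a b)) (hF : ∀ x ∈ Ioo a b, HasDerivAt F (f x) x)
    (hf : IntervalIntegrable f volume a b) :
    ∫ w in a..b, ∫ v in a..b, (min w v - w * v) * f w * f v
      = b * F b ^ 2 + a * F a ^ 2 - 2 * a * F a * F b - 2 * F b * (∫ x in a..b, F x)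
        + (∫ x in a..b, F x ^ 2) - (b * F b - a * F a - ∫ x in a..b, F x) ^ 2 := by
  set M := b * F b - a * F a - ∫ x in a..b, F x
  have hinner : ∀ w ∈ uIcc a b, ∫ v in a..b, (min w v - w * v) * f w * f v
      = (F b - M) * (w * f w) - a * F a * f w - (∫ v in a..w, F v) * f w := by
    intro w hw
    rw [uIcc_of_le hab] at hw
    calc ∫ v in a..b, (min w v - w * v) * f w * f v
        = (∫ v in a..b, (min w v - w * v) * f v) * f w := by
          rw [← intervalIntegral.integral_mul_const]
          exact integral_congr fun v _ => by ring
      _ = _ := by rw [integral_min_sub_mul_mul_eq_of_hasDerivAt hw hFc hF hf]; ring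
  have hid : IntervalIntegrable (fun w => (F b - M) * (w * f w)) volume a b :=
    (hf.continuousOn_mul (continuousOn_id' _)).const_mul _
  have hΦ : IntervalIntegrable (fun w => (∫ v in a..w, F v) * f w) volume a b :=
    hf.continuousOn_mul (continuousOn_primitive_interval
      ((hFc.integrableOn_compact isCompact_Icc).mono_set (uIcc_of_le hab).subset))
  rw [integral_congr hinner, intervalIntegral.integral_sub (hid.sub (hf.const_mul _)) hΦ,
    intervalIntegral.integral_sub hid (hf.const_mul _),
    intervalIntegral.integral_const_mul, intervalIntegral.integral_const_mul,
    integral_id_mul_eq_of_hasDerivAt hab hFc hF hf,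
    integral_eq_sub_of_hasDerivAt_of_le hab hFc hF hf,
    integral_primitive_mul_eq_of_hasDerivAt hab hFc hF hf]
  ring

end KernelIntegral

theorem Lambda223_closed_form_general (a2 b2 : ℝ)
    (h1 : a2 < 1 - b2)
    (G : ℝ → ℝ) (U : Set ℝ) (hU : IsOpen U) (hsub : Icc a2 (1 - b2) ⊆ U)
    (hG : ContDiffOn ℝ 1 G U)
    (Γ c2 c4 : ℝ)
    (hΓ : Γ = ((1 - a2 - b2) ^ 2)⁻¹)
    (hc2 : c2 = ((1 - b2) - a2)⁻¹ * ∫ u in a2..(1 - b2), (G u) ^ 2)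
    (hc4 : c4 = ((1 - b2) - a2)⁻¹ * ∫ u in a2..(1 - b2), (G u) ^ 4) :
    Γ * ∫ w in a2..(1 - b2), ∫ v in a2..(1 - b2),
        (min w v - w * v) * G w * G v * deriv G v * deriv G w
      = (Γ / 4) * ( a2 * (1 - a2) * (G a2) ^ 4
        + b2 * (1 - b2) * (G (1 - b2)) ^ 4
        - 2 * a2 * b2 * (G a2) ^ 2 * (G (1 - b2)) ^ 2
        - 2 * (1 - a2 - b2) * (a2 * (G a2) ^ 2 + b2 * (G (1 - b2)) ^ 2) * c2
        - Γ⁻¹ * c2 ^ 2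
        + (1 - a2 - b2) * c4 ) := by
  have hGd : ∀ x ∈ Icc a2 (1 - b2), HasDerivAt G (deriv G x) x := fun x hx =>
    ((hG.differentiableOn one_ne_zero x (hsub hx)).differentiableAt
      (hU.mem_nhds (hsub hx))).hasDerivAt
  have hF : ∀ x ∈ Icc a2 (1 - b2),
      HasDerivAt (fun x => G x ^ 2 / 2) (G x * deriv G x) x := fun x hx =>
    (((hGd x hx).fun_pow 2).div_const 2).congr_deriv (by norm_num; ring)
  have hf : ContinuousOn (fun x => G x * deriv G x) (Icc a2 (1 - b2)) :=
    (HasDerivAt.continuousOn hGd).mul ((hG.continuousOn_deriv_of_isOpen hU le_rfl).mono hsub)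
  have hlen : 1 - b2 - a2 ≠ 0 := by linarith
  have hG2 : ∫ x in a2..(1 - b2), G x ^ 2 / 2 = (1 - b2 - a2) * c2 / 2 := by
    rw [intervalIntegral.integral_div, hc2]
    field_simp
  have hG4 : ∫ x in a2..(1 - b2), (G x ^ 2 / 2) ^ 2 = (1 - b2 - a2) * c4 / 4 := by
    rw [show (fun x => (G x ^ 2 / 2) ^ 2) = fun x => G x ^ 4 / 4 from funext fun x => by ring,
      intervalIntegral.integral_div, hc4]
    field_simp
  calc Γ * ∫ w in a2..(1 - b2), ∫ v in a2..(1 - b2),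
        (min w v - w * v) * G w * G v * deriv G v * deriv G w
      = Γ * ∫ w in a2..(1 - b2), ∫ v in a2..(1 - b2),
        (min w v - w * v) * (G w * deriv G w) * (G v * deriv G v) := by
        congr 1
        exact integral_congr fun w _ => integral_congr fun v _ => by ring
    _ = _ := by
      rw [integral_integral_min_sub_mul_mul_eq_of_hasDerivAt h1.le (HasDerivAt.continuousOn hF)
          (fun x hx => hF x (Ioo_subset_Icc_self hx)) (hf.intervalIntegrable_of_Icc h1.le),
        hG2, hG4, hΓ]
      field_simp
      ring

/-- Closed-form expression `Λ₂₂₃` for the asymptotic variance component of the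
second trimmed moment: single-integration formula for
`Γ·∫∫ K(w,v) G(w) G(v) G'(v) G'(w) dv dw` over `[a₂,b̄₂]²`. -/
theorem Lambda223_closed_form (a2 b2 : ℝ)
    (h0 : 0 ≤ a2) (h1 : a2 < 1 - b2) (h2 : 1 - b2 ≤ 1) (hab : a2 + b2 < 1)
    (G : ℝ → ℝ) (U : Set ℝ) (hU : IsOpen U) (hsub : Icc a2 (1 - b2) ⊆ U)
    (hG : ContDiffOn ℝ 1 G U)
    (Γ c2 c4 : ℝ)
    (hΓ : Γ = ((1 - a2 - b2) ^ 2)⁻¹)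
    (hc2 : c2 = ((1 - b2) - a2)⁻¹ * ∫ u in a2..(1 - b2), (G u) ^ 2)
    (hc4 : c4 = ((1 - b2) - a2)⁻¹ * ∫ u in a2..(1 - b2), (G u) ^ 4) :
    Γ * ∫ w in a2..(1 - b2), ∫ v in a2..(1 - b2),
        (min w v - w * v) * G w * G v * deriv G v * deriv G w
      = (Γ / 4) * ( a2 * (1 - a2) * (G a2) ^ 4
        + b2 * (1 - b2) * (G (1 - b2)) ^ 4
        - 2 * a2 * b2 * (G a2) ^ 2 * (G (1 - b2)) ^ 2
        - 2 * (1 - a2 - b2) * (a2 * (G a2) ^ 2 + b2 * (G (1 - b2)) ^ 2) * c2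
        - Γ⁻¹ * c2 ^ 2
        + (1 - a2 - b2) * c4 ) :=
  Lambda223_closed_form_general a2 b2 h1 G U hU hsub hG Γ c2 c4 hΓ hc2 hc4
end
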